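/- Let G be an abelian topological group whose identity component H (the connected component of the identity, which is a subgroup of G) is open in G and is divisible as an abstract abelian group. Then the quotient homomorphism \pi : G \to G/H admits a group-homomorphism section s with \pi \circ s = id, and the map H \times (G/H) \to G given by (h, d) \mapsto h \cdot s(d) is an isomorphism of topological groups, where G/H carries the (discrete) quotient topology. -/

import Mathlib

/-!
A divisible abelian group is an injective `ℤ`-module (Baer), so the identity on the identity
component `H` extends to a retraction `ρ : G →* H`, and `g ↦ g / ρ g` factors through a
homomorphic section `s` of `G → G ⧸ H`. Every `g` is then uniquely `h * s d`, and since `H` is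
open the quotient is discrete, so `s` and hence both directions of `(h, d) ↦ h * s d` are
continuous.
-/

theorem MonoidHom.exists_extension_of_rootableBy {M N A : Type*} [CommGroup M] [CommGroup N]
    [CommGroup A] [RootableBy A ℕ] (f : M →* N) (hf : Function.Injective f) (g : M →* A) :
    ∃ g' : N →* A, g'.comp f = g := by
  let : DivisibleBy (Additive A) ℕ :=
    divisibleByOfSMulRightSurj _ _ fun hn => RootableBy.surjective_pow A ℕ hn
  let := AddGroup.divisibleByIntOfDivisibleByNat (Additive A)
  obtain ⟨g', hg'⟩ := (Module.Baer.of_divisible (Additive A)).extension_property_addMonoidHom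
    f.toAdditive hf g.toAdditive
  exact ⟨MonoidHom.toAdditive.symm g', MonoidHom.toAdditive.injective hg'⟩

section

variable {G : Type*} [CommGroup G] {H : Subgroup G}

theorem Subgroup.exists_section_of_retraction (ρ : G →* H)
    (hρ : ρ.comp H.subtype = MonoidHom.id H) :
    ∃ s : G ⧸ H →* G, (QuotientGroup.mk' H).comp s = MonoidHom.id (G ⧸ H) := by
  have hρ_apply (h : H) : ρ h = h := DFunLike.congr_fun hρ h
  refine ⟨QuotientGroup.lift H (MonoidHom.id G / H.subtype.comp ρ) fun g hg => ?_, ?_⟩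
  · simp [hρ_apply ⟨g, hg⟩]
  · ext g
    simp

namespace QuotientGroup

variable (s : G ⧸ H →* G)

theorem mk_section_apply (hs : (mk' H).comp s = MonoidHom.id (G ⧸ H)) (d : G ⧸ H) :
    (s d : G ⧸ H) = d :=
  DFunLike.congr_fun hs d

theorem mul_inv_section_mk_mem (hs : (mk' H).comp s = MonoidHom.id (G ⧸ H)) (g : G) :
    g * (s g)⁻¹ ∈ H := by
  rw [← eq_one_iff, mk_mul, mk_inv, mk_section_apply s hs, mul_inv_cancel]

def prodMulEquivOfSection (hs : (mk' H).comp s = MonoidHom.id (G ⧸ H)) :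
    H × G ⧸ H ≃* G where
  toFun := H.subtype.coprod s
  invFun g := (⟨g * (s g)⁻¹, mul_inv_section_mk_mem s hs g⟩, g)
  left_inv := by
    rintro ⟨h, d⟩
    have hmk : ((h * s d : G) : G ⧸ H) = d := by
      rw [mk_mul, (eq_one_iff _).mpr h.2, one_mul, mk_section_apply s hs]
    ext
    · simp [hmk]
    · exact hmk
  right_inv g := by simp
  map_mul' := map_mul _

def prodContinuousMulEquivOfSection [TopologicalSpace G] [IsTopologicalGroup G]
    (hs : (mk' H).comp s = MonoidHom.id (G ⧸ H)) (hH : IsOpen (H : Set G)) :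
    H × G ⧸ H ≃ₜ* G :=
  haveI := discreteTopology hH
  { prodMulEquivOfSection s hs with
    continuous_toFun := by
      have : Continuous s := continuous_of_discreteTopology
      exact continuous_subtype_val.fst'.mul (this.comp continuous_snd)
    continuous_invFun := by
      have : Continuous fun g : G => s g := continuous_of_discreteTopology.comp continuous_mk
      exact (continuous_id.mul this.inv).subtype_mk _ |>.prodMk continuous_mk }

end QuotientGroup

end

/-- Let `G` be an abelian topological group whose identity component `H`
is open in `G` and divisible. Then the quotient homomorphism `π : G → G/H` admits a
group-homomorphism section `s` with `π ∘ s = id`, and `(h, d) ↦ h * s d` is an isomorphism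
of topological groups `H × (G/H) ≃ G`, where `G/H` carries the quotient topology. -/
theorem identityComponent_splits_of_divisible
    {G : Type*} [CommGroup G] [TopologicalSpace G] [IsTopologicalGroup G]
    (hopen : IsOpen ((Subgroup.connectedComponentOfOne G : Subgroup G) : Set G))
    (hdiv : ∀ (h : Subgroup.connectedComponentOfOne G) (n : ℕ), 0 < n →
      ∃ h' : Subgroup.connectedComponentOfOne G, h' ^ n = h) :
    ∃ s : G ⧸ Subgroup.connectedComponentOfOne G →* G,
      (QuotientGroup.mk' (Subgroup.connectedComponentOfOne G)).comp s =
        MonoidHom.id (G ⧸ Subgroup.connectedComponentOfOne G) ∧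
      ∃ φ : (Subgroup.connectedComponentOfOne G × G ⧸ Subgroup.connectedComponentOfOne G) ≃ₜ G,
        (∀ a b, φ (a * b) = φ a * φ b) ∧
        (∀ (h : Subgroup.connectedComponentOfOne G)
           (d : G ⧸ Subgroup.connectedComponentOfOne G), φ (h, d) = (h : G) * s d) := by
  set H := Subgroup.connectedComponentOfOne G
  let : RootableBy H ℕ := rootableByOfPowLeftSurj _ _ fun hn a => hdiv a _ (Nat.pos_of_ne_zero hn)
  obtain ⟨ρ, hρ⟩ := H.subtype.exists_extension_of_rootableBy H.subtype_injective (.id H)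
  obtain ⟨s, hs⟩ := H.exists_section_of_retraction ρ hρ
  let φ := QuotientGroup.prodContinuousMulEquivOfSection s hs hopen
  exact ⟨s, hs, φ.toHomeomorph, map_mul φ, fun _ _ => rfl⟩
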